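/- Let λ₁, ..., λ_n be nonzero reals with m = min_k |λ_k| > 0, and let Δ > 0, z ∈ ℝ. Define the truncation error E(N) = | Σ_{k=N+1}^∞ (1/(π(k+½))) Im[ φ((k+½)Δ) e^{−j(k+½)Δz} ] | where φ(u) = Π_{i=1}^n (1 − 2juλ_i)^{−1/2} (principal branch). Then E(N) ≤ (2/(nπ)) (2NΔm)^{−n/2}. -/

import Mathlib

/-!
Each factor of `φ u` has modulus at most `(2 u |λᵢ|)^(-1/2) ≤ (2 u m)^(-1/2)`, so with
`s = n/2` and `c = N + k + 3/2` the `k`-th term is at most `(2Δm)^(-s) c^(-(s+1)) / π`.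
The estimate `s (a+1)^(-(s+1)) ≤ a^(-s) - (a+1)^(-s)` dominates these bounds by a telescoping
series with sum `(2Δm)^(-s) (N + 1/2)^(-s) / (π s)`, and `(N + 1/2)^(-s) ≤ N^(-s)`.
-/

open Real Filter Topology

theorem Real.mul_rpow_neg_add_one_le_rpow_neg_sub {a s : ℝ} (ha : 0 < a) (hs : 0 ≤ s) :
    s * (a + 1) ^ (-(s + 1)) ≤ a ^ (-s) - (a + 1) ^ (-s) := by
  have ha1 : 0 < a + 1 := by linarith
  have hlog : 1 / (a + 1) ≤ log ((a + 1) / a) := by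
    have := one_sub_inv_le_log_of_pos (div_pos ha1 ha)
    rwa [inv_div, one_sub_div ha1.ne', add_sub_cancel_left] at this
  have hbernoulli : 1 + s / (a + 1) ≤ ((a + 1) / a) ^ s := calc
    1 + s / (a + 1) ≤ s * log ((a + 1) / a) + 1 := by
      rw [div_eq_mul_one_div s]; nlinarith [mul_le_mul_of_nonneg_left hlog hs]
    _ ≤ ((a + 1) / a) ^ s := by
      rw [rpow_def_of_pos (div_pos ha1 ha), mul_comm]; exact add_one_le_exp _
  have hsplit : a ^ (-s) = (a + 1) ^ (-s) * ((a + 1) / a) ^ s := by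
    rw [div_rpow ha1.le ha.le, rpow_neg ha.le, rpow_neg ha1.le]
    field_simp
  have hshift : (a + 1) ^ (-(s + 1)) = (a + 1) ^ (-s) / (a + 1) := by
    rw [neg_add, rpow_add ha1, rpow_neg_one, div_eq_mul_inv]
  rw [hsplit, hshift]
  calc s * ((a + 1) ^ (-s) / (a + 1))
      = (a + 1) ^ (-s) * (1 + s / (a + 1)) - (a + 1) ^ (-s) := by ring
    _ ≤ (a + 1) ^ (-s) * ((a + 1) / a) ^ s - (a + 1) ^ (-s) := by gcongr

theorem Antitone.hasSum_sub_succ {f : ℕ → ℝ} {l : ℝ} (hf : Antitone f)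
    (hl : Tendsto f atTop (𝓝 l)) : HasSum (fun k => f k - f (k + 1)) (f 0 - l) := by
  rw [hasSum_iff_tendsto_nat_of_nonneg fun k => sub_nonneg.2 (hf k.le_succ)]
  simp_rw [Finset.sum_range_sub']
  exact tendsto_const_nhds.sub hl

theorem abs_tsum_le_of_abs_le_rpow_neg {f : ℕ → ℝ} {C s b : ℝ} (hs : 0 < s) (hb : 0 < b)
    (hf : ∀ k : ℕ, |f k| ≤ C * (b + (k + 1)) ^ (-(s + 1))) :
    |∑' k, f k| ≤ C / s * b ^ (-s) := by
  have hC : 0 ≤ C := nonneg_of_mul_nonneg_left ((abs_nonneg _).trans (hf 0)) (by positivity)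
  set g : ℕ → ℝ := fun k => (b + k) ^ (-s)
  have hg : Antitone g := fun i j hij =>
    rpow_le_rpow_of_nonpos (by positivity) (by gcongr) (neg_nonpos.2 hs.le)
  have hg0 : Tendsto g atTop (𝓝 0) :=
    (tendsto_rpow_neg_atTop hs).comp
      (tendsto_atTop_add_const_left _ _ tendsto_natCast_atTop_atTop)
  have hsum : HasSum (fun k => C / s * (g k - g (k + 1))) (C / s * b ^ (-s)) := by
    simpa [g] using (hg.hasSum_sub_succ hg0).mul_left (C / s)
  refine tsum_of_norm_bounded (f := f) hsum fun k => (hf k).trans ?_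
  have := mul_rpow_neg_add_one_le_rpow_neg_sub (a := b + k) (by positivity) hs.le
  rw [← le_div_iff₀' hs] at this
  calc C * (b + (k + 1)) ^ (-(s + 1)) ≤ C * ((g k - g (k + 1)) / s) := by
        gcongr; simpa [g, add_assoc] using this
    _ = C / s * (g k - g (k + 1)) := by ring

theorem Complex.norm_one_sub_I_mul_cpow_neg_le {x r : ℝ} (hx : x ≠ 0) (hr : 0 ≤ r) :
    ‖(1 - I * x) ^ ((-r : ℝ) : ℂ)‖ ≤ |x| ^ (-r) := by
  rw [norm_cpow_real]
  refine rpow_le_rpow_of_nonpos (abs_pos.2 hx) ?_ (neg_nonpos.2 hr)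
  simpa using abs_im_le_norm (1 - I * x)

theorem Complex.abs_im_mul_exp_le {w z : ℂ} (hz : z.re = 0) : |(w * exp z).im| ≤ ‖w‖ := by
  simpa [norm_exp, hz] using abs_im_le_norm (w * exp z)

theorem norm_prod_one_sub_I_mul_cpow_neg_half_le {ι : Type*} [Fintype ι] (lam : ι → ℝ)
    {u m : ℝ} (hu : 0 < u) (hm : 0 < m) (hmin : ∀ i, m ≤ |lam i|) :
    ‖∏ i, ((1 : ℂ) - 2 * Complex.I * (u : ℂ) * (lam i : ℂ)) ^ (-(1/2) : ℂ)‖ ≤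
      (2 * u * m) ^ (-(Fintype.card ι / 2 : ℝ)) := by
  have hfactor : ∀ i, ‖((1 : ℂ) - 2 * Complex.I * (u : ℂ) * (lam i : ℂ)) ^ (-(1/2) : ℂ)‖ ≤
      (2 * u * m) ^ (-(1/2) : ℝ) := fun i => by
    have hlam : m * (2 * u) ≤ |2 * u * lam i| := by
      rw [abs_mul, abs_of_pos (by positivity : 0 < 2 * u), mul_comm]; gcongr; exact hmin i
    calc _ = ‖(1 - Complex.I * ((2 * u * lam i : ℝ) : ℂ)) ^ ((-(1/2) : ℝ) : ℂ)‖ := by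
          push_cast; ring_nf
      _ ≤ |2 * u * lam i| ^ (-(1/2) : ℝ) :=
          Complex.norm_one_sub_I_mul_cpow_neg_le
            (abs_pos.1 ((by positivity : 0 < m * (2 * u)).trans_le hlam)) (by norm_num)
      _ ≤ (2 * u * m) ^ (-(1/2) : ℝ) :=
          rpow_le_rpow_of_nonpos (by positivity) (by linarith) (by norm_num)
  calc _ ≤ ∏ _i : ι, (2 * u * m) ^ (-(1/2) : ℝ) := by
        rw [norm_prod]; exact Finset.prod_le_prod (fun i _ => norm_nonneg _) fun i _ => hfactor i
    _ = _ := by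
        rw [Finset.prod_const, Finset.card_univ, ← rpow_natCast, ← rpow_mul (by positivity)]
        ring_nf

open Real in
theorem truncation_error_bound_general (n : ℕ) (hn : 1 ≤ n)
    (lam : Fin n → ℝ)
    (m : ℝ) (hm : 0 < m) (hmin : ∀ i, m ≤ |lam i|)
    (Δ : ℝ) (hΔ : 0 < Δ) (z : ℝ) (N : ℕ) (hN : 1 ≤ N)
    (φ : ℝ → ℂ)
    (hφ : φ = fun (u : ℝ) => ∏ i : Fin n,
      ((1 : ℂ) - 2 * Complex.I * (u : ℂ) * (lam i : ℂ)) ^ (-(1/2) : ℂ)) :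
    |∑' k : ℕ,
        (1 / (π * ((N + 1 + k : ℝ) + 1/2))) *
          (φ (((N + 1 + k : ℝ) + 1/2) * Δ) *
            Complex.exp (-Complex.I * ((N + 1 + k : ℝ) + 1/2) * Δ * z)).im| ≤
      (2 / (n * π)) * (2 * N * Δ * m) ^ (-(n / 2) : ℝ) := by
  set s : ℝ := n / 2 with hs_def
  have hs : 0 < s := by positivity
  have hN' : (1 : ℝ) ≤ N := by exact_mod_cast hN
  have hφ_le : ∀ u, 0 < u → ‖φ u‖ ≤ (2 * u * m) ^ (-s) := fun u hu => by
    simpa [hφ] using norm_prod_one_sub_I_mul_cpow_neg_half_le lam hu hm hmin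
  set C : ℝ := 1 / π * (2 * Δ * m) ^ (-s) with hC
  refine (abs_tsum_le_of_abs_le_rpow_neg (C := C) hs (b := N + 1/2) (by positivity)
    fun k => ?_).trans ?_
  · set c : ℝ := N + 1 + k + 1/2 with hc_def
    have hc : 0 < c := by positivity
    calc _ ≤ 1 / (π * c) * ‖φ (c * Δ)‖ := by
          rw [abs_mul, abs_of_pos (by positivity)]
          gcongr
          exact Complex.abs_im_mul_exp_le (by simp)
      _ ≤ 1 / (π * c) * (2 * (c * Δ) * m) ^ (-s) := by gcongr; exact hφ_le _ (by positivity)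
      _ = C * c ^ (-(s + 1)) := by
          rw [show 2 * (c * Δ) * m = 2 * Δ * m * c by ring, mul_rpow (by positivity) hc.le,
            neg_add, rpow_add hc, rpow_neg_one, hC]
          field_simp
      _ = C * (N + 1/2 + (k + 1)) ^ (-(s + 1)) := by rw [hc_def]; ring_nf
  · calc C / s * (N + 1/2) ^ (-s) ≤ C / s * (N : ℝ) ^ (-s) := by
          refine mul_le_mul_of_nonneg_left ?_ (by positivity)
          exact rpow_le_rpow_of_nonpos (by positivity) (by linarith) (by linarith)
      _ = _ := by
          rw [show (2 : ℝ) * N * Δ * m = 2 * Δ * m * N by ring,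
            mul_rpow (by positivity) (by positivity), hC]
          field_simp
          rw [hs_def]; ring

open Real in
theorem truncation_error_bound (n : ℕ) (hn : 1 ≤ n)
    (lam : Fin n → ℝ) (hlam : ∀ i, lam i ≠ 0)
    (m : ℝ) (hm : 0 < m) (hmin : ∀ i, m ≤ |lam i|) (hmem : ∃ i, m = |lam i|)
    (Δ : ℝ) (hΔ : 0 < Δ) (z : ℝ) (N : ℕ) (hN : 1 ≤ N)
    (φ : ℝ → ℂ)
    (hφ : φ = fun (u : ℝ) => ∏ i : Fin n,
      ((1 : ℂ) - 2 * Complex.I * (u : ℂ) * (lam i : ℂ)) ^ (-(1/2) : ℂ)) :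
    |∑' k : ℕ,
        (1 / (π * ((N + 1 + k : ℝ) + 1/2))) *
          (φ (((N + 1 + k : ℝ) + 1/2) * Δ) *
            Complex.exp (-Complex.I * ((N + 1 + k : ℝ) + 1/2) * Δ * z)).im| ≤
      (2 / (n * π)) * (2 * N * Δ * m) ^ (-(n / 2) : ℝ) :=
  truncation_error_bound_general n hn lam m hm hmin Δ hΔ z N hN φ hφ
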